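/- arXiv:1303.5145 — 5 statements merged into one kernel-verified Lean document; each statement's English description precedes it below -/
import Mathlib

section
/- For every integer K ≥ 1, every integer p ≥ 1, and every q ∈ [1,∞], the row-column overlap norm Ω_q is a norm on K-tuples of symmetric p×p real matrices: for all symmetric Θ¹,…,Θᴷ and Φ¹,…,Φᴷ, (i) Ω_q(Θ¹,…,Θᴷ) is finite and nonnegative; (ii) Ω_q(Θ¹,…,Θᴷ) = 0 if and only if Θᵏ = 0 for all k; (iii) Ω_q(cΘ¹,…,cΘᴷ) = |c| Ω_q(Θ¹,…,Θᴷ) for all real c; (iv) Ω_q(Θ¹+Φ¹,…,Θᴷ+Φᴷ) ≤ Ω_q(Θ¹,…,Θᴷ) + Ω_q(Φ¹,…,Φᴷ). -/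
open Matrix
open scoped ENNReal BigOperators

/-- The ℓ_q norm of a finitely-indexed real vector, for q ∈ [0,∞]
(the maximum absolute entry when q = ∞). -/
noncomputable def lqNorm (q : ℝ≥0∞) {ι : Type*} [Fintype ι] (x : ι → ℝ) : ℝ :=
  ‖(WithLp.equiv q (ι → ℝ)).symm x‖

/-- The row-column overlap norm Ω_q of a K-tuple of p×p real matrices:
the infimum of Σ_j ‖([V¹;…;Vᴷ])_j‖_q over all decompositions Θᵏ = Vᵏ + (Vᵏ)ᵀ. -/
noncomputable def rcon (q : ℝ≥0∞) (K p : ℕ)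
    (Θ : Fin K → Matrix (Fin p) (Fin p) ℝ) : ℝ :=
  sInf { r : ℝ | ∃ V : Fin K → Matrix (Fin p) (Fin p) ℝ,
    (∀ k, Θ k = V k + (V k)ᵀ) ∧
    r = ∑ j : Fin p, lqNorm q (fun ki : Fin K × Fin p => V ki.1 ki.2 j) }

/-- The row-column overlap norm Ω_q of a single p×p matrix (the case K = 1). -/
noncomputable def rcon1 (q : ℝ≥0∞) {p : ℕ} (Θ : Matrix (Fin p) (Fin p) ℝ) : ℝ :=
  sInf { r : ℝ | ∃ V : Matrix (Fin p) (Fin p) ℝ,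
    Θ = V + Vᵀ ∧ r = ∑ j : Fin p, lqNorm q (fun i => V i j) }


/-!
Ω_q is the quotient seminorm of the column-sum seminorm `V ↦ Σ_j ‖[V¹;…;Vᴷ]_j‖_q` under the
linear map `V ↦ (Vᵏ + (Vᵏ)ᵀ)ₖ`, whose range is exactly the symmetric tuples. Infima of a seminorm
over the fibres of a linear map are absolutely homogeneous and subadditive on its range.
Definiteness holds because `|Θᵏᵢⱼ| = |Vᵏᵢⱼ + Vᵏⱼᵢ|` is bounded by twice the column sum of any
decomposition.
-/

open Set
open scoped Pointwise

namespace Seminorm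

variable {E F : Type*} [AddCommGroup E] [Module ℝ E] [AddCommGroup F] [Module ℝ F]

/-- `y ↦ inf { N x | f x = y }`; off the range of `f` this is `sInf ∅ = 0`. -/
noncomputable def pushforward (N : Seminorm ℝ E) (f : E →ₗ[ℝ] F) (y : F) : ℝ :=
  sInf (N '' (f ⁻¹' {y}))

variable (N : Seminorm ℝ E) (f : E →ₗ[ℝ] F)

lemma bddBelow_image_preimage (y : F) : BddBelow (N '' (f ⁻¹' {y})) :=
  ⟨0, by rintro _ ⟨x, -, rfl⟩; exact apply_nonneg N x⟩

lemma pushforward_nonneg (y : F) : 0 ≤ N.pushforward f y :=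
  Real.sInf_nonneg (by rintro _ ⟨x, -, rfl⟩; exact apply_nonneg N x)

lemma pushforward_le {x : E} {y : F} (h : f x = y) : N.pushforward f y ≤ N x :=
  csInf_le (N.bddBelow_image_preimage f y) ⟨x, h, rfl⟩

lemma le_pushforward {y : F} (hy : y ∈ range f) {a : ℝ} (h : ∀ x, f x = y → a ≤ N x) :
    a ≤ N.pushforward f y := by
  obtain ⟨x, rfl⟩ := hy
  exact le_csInf ⟨N x, x, rfl, rfl⟩ (by rintro _ ⟨x', hx', rfl⟩; exact h x' hx')

lemma pushforward_zero : N.pushforward f 0 = 0 :=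
  le_antisymm ((N.pushforward_le f (map_zero f)).trans_eq (map_zero N)) (N.pushforward_nonneg f 0)

lemma image_preimage_smul {c : ℝ} (hc : c ≠ 0) (y : F) :
    N '' (f ⁻¹' {c • y}) = |c| • N '' (f ⁻¹' {y}) := by
  ext r
  simp only [mem_image, mem_preimage, mem_singleton_iff, mem_smul_set, smul_eq_mul]
  constructor
  · rintro ⟨x, hx, rfl⟩
    refine ⟨N (c⁻¹ • x), ⟨c⁻¹ • x, by rw [map_smul, hx, inv_smul_smul₀ hc], rfl⟩, ?_⟩
    rw [map_smul_eq_mul, norm_inv, Real.norm_eq_abs, mul_inv_cancel_left₀ (abs_ne_zero.mpr hc)]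
  · rintro ⟨_, ⟨x, hx, rfl⟩, rfl⟩
    exact ⟨c • x, by rw [map_smul, hx], by rw [map_smul_eq_mul, Real.norm_eq_abs]⟩

lemma pushforward_smul (c : ℝ) (y : F) : N.pushforward f (c • y) = |c| * N.pushforward f y := by
  rcases eq_or_ne c 0 with rfl | hc
  · rw [zero_smul, abs_zero, zero_mul, pushforward_zero]
  rw [pushforward, image_preimage_smul N f hc, Real.sInf_smul_of_nonneg (abs_nonneg c),
    smul_eq_mul, pushforward]

lemma pushforward_add_le {y₁ y₂ : F} (h₁ : y₁ ∈ range f) (h₂ : y₂ ∈ range f) :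
    N.pushforward f (y₁ + y₂) ≤ N.pushforward f y₁ + N.pushforward f y₂ := by
  obtain ⟨x₁, rfl⟩ := h₁
  obtain ⟨x₂, rfl⟩ := h₂
  have hne : ∀ x, (N '' (f ⁻¹' {f x})).Nonempty := fun x => ⟨N x, x, rfl, rfl⟩
  have hle : ∀ a ∈ N '' (f ⁻¹' {f x₁}) + N '' (f ⁻¹' {f x₂}),
      N.pushforward f (f x₁ + f x₂) ≤ a := by
    rintro _ ⟨_, ⟨x, hx, rfl⟩, _, ⟨x', hx', rfl⟩, rfl⟩
    exact (N.pushforward_le f (by rw [map_add, hx, hx'])).trans (map_add_le_add N x x')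
  exact (le_csInf ((hne x₁).add (hne x₂)) hle).trans_eq <| csInf_add (hne x₁)
    (N.bddBelow_image_preimage f _) (hne x₂) (N.bddBelow_image_preimage f _)

end Seminorm

section LqNorm

variable (q : ℝ≥0∞) [Fact (1 ≤ q)] {ι : Type*} [Fintype ι]

lemma lqNorm_nonneg (x : ι → ℝ) : 0 ≤ lqNorm q x := norm_nonneg _

lemma lqNorm_add_le (x y : ι → ℝ) : lqNorm q (x + y) ≤ lqNorm q x + lqNorm q y :=
  norm_add_le (WithLp.toLp q x) (WithLp.toLp q y)

lemma lqNorm_smul (c : ℝ) (x : ι → ℝ) : lqNorm q (c • x) = |c| * lqNorm q x :=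
  (norm_smul c (WithLp.toLp q x)).trans (by rw [Real.norm_eq_abs]; rfl)

lemma abs_le_lqNorm (x : ι → ℝ) (i : ι) : |x i| ≤ lqNorm q x :=
  PiLp.norm_apply_le (WithLp.toLp q x) i

end LqNorm

namespace Matrix

variable (q : ℝ≥0∞) [Fact (1 ≤ q)]

noncomputable def columnLqSeminorm (m n : Type*) [Fintype m] [Fintype n] :
    Seminorm ℝ (Matrix m n ℝ) :=
  Seminorm.of (fun M => ∑ j, lqNorm q fun i => M i j)
    (fun M M' => by
      rw [← Finset.sum_add_distrib]
      exact Finset.sum_le_sum fun j _ => lqNorm_add_le q _ _)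
    (fun c M => by
      rw [Real.norm_eq_abs, Finset.mul_sum]
      exact Finset.sum_congr rfl fun j _ => lqNorm_smul q c fun i => M i j)

lemma abs_le_columnLqSeminorm {m n : Type*} [Fintype m] [Fintype n] (M : Matrix m n ℝ) (i : m) (j : n) :
    |M i j| ≤ columnLqSeminorm q m n M :=
  (abs_le_lqNorm q (fun i => M i j) i).trans <|
    Finset.single_le_sum (f := fun j => lqNorm q fun i => M i j) (fun _ _ => lqNorm_nonneg q _)
      (Finset.mem_univ j)

variable {κ m n : Type*}

/-- The vertical stacking `[V¹;…;Vᴷ]`. -/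
def stackLinearMap : (κ → Matrix m n ℝ) →ₗ[ℝ] Matrix (κ × m) n ℝ where
  toFun V := of fun ki j => V ki.1 ki.2 j
  map_add' _ _ := rfl
  map_smul' _ _ := rfl

def symmetrizeLinearMap : (κ → Matrix n n ℝ) →ₗ[ℝ] κ → Matrix n n ℝ where
  toFun V k := V k + (V k)ᵀ
  map_add' V W := by
    funext k
    simp only [Pi.add_apply, transpose_add]
    abel
  map_smul' c V := by
    funext k
    simp only [Pi.smul_apply, transpose_smul, smul_add, RingHom.id_apply]

lemma mem_range_symmetrizeLinearMap {Θ : κ → Matrix n n ℝ} (hΘ : ∀ k, (Θ k).IsSymm) :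
    Θ ∈ range symmetrizeLinearMap := by
  refine ⟨fun k => (2 : ℝ)⁻¹ • Θ k, funext fun k => ?_⟩
  change (2 : ℝ)⁻¹ • Θ k + ((2 : ℝ)⁻¹ • Θ k)ᵀ = Θ k
  rw [transpose_smul, (hΘ k).eq, ← two_smul ℝ, smul_inv_smul₀ two_ne_zero]

end Matrix

section Rcon

variable (q : ℝ≥0∞) [Fact (1 ≤ q)] {K p : ℕ}

lemma rcon_eq_pushforward (Θ : Fin K → Matrix (Fin p) (Fin p) ℝ) :
    rcon q K p Θ = ((columnLqSeminorm q (Fin K × Fin p) (Fin p)).comp stackLinearMap).pushforward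
      symmetrizeLinearMap Θ := by
  unfold rcon Seminorm.pushforward
  congr 1
  ext r
  simp only [mem_image, mem_preimage, mem_singleton_iff, funext_iff, eq_comm]
  rfl

lemma abs_apply_le_two_mul_rcon {Θ : Fin K → Matrix (Fin p) (Fin p) ℝ} (hΘ : ∀ k, (Θ k).IsSymm)
    (k : Fin K) (i j : Fin p) : |Θ k i j| ≤ 2 * rcon q K p Θ := by
  rw [rcon_eq_pushforward, ← div_le_iff₀' two_pos]
  refine Seminorm.le_pushforward _ _ (mem_range_symmetrizeLinearMap hΘ) fun V hV => ?_
  rw [div_le_iff₀' two_pos, Seminorm.comp_apply, ← hV]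
  calc |V k i j + V k j i| ≤ |V k i j| + |V k j i| := abs_add_le _ _
    _ ≤ _ + _ := add_le_add (abs_le_columnLqSeminorm q (stackLinearMap V) (k, i) j)
        (abs_le_columnLqSeminorm q (stackLinearMap V) (k, j) i)
    _ = _ := (two_mul _).symm

end Rcon

theorem rcon_is_norm_general (K p : ℕ)
    (q : ℝ≥0∞) (hq : 1 ≤ q)
    (Θ Φ : Fin K → Matrix (Fin p) (Fin p) ℝ)
    (hΘ : ∀ k, (Θ k).IsSymm) (hΦ : ∀ k, (Φ k).IsSymm) :
    0 ≤ rcon q K p Θ ∧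
    (rcon q K p Θ = 0 ↔ ∀ k, Θ k = 0) ∧
    (∀ c : ℝ, rcon q K p (fun k => c • Θ k) = |c| * rcon q K p Θ) ∧
    rcon q K p (fun k => Θ k + Φ k) ≤ rcon q K p Θ + rcon q K p Φ := by
  have : Fact (1 ≤ q) := ⟨hq⟩
  have hdef : rcon q K p Θ = 0 → ∀ k, Θ k = 0 := fun h k => by
    ext i j
    simpa [h] using abs_apply_le_two_mul_rcon q hΘ k i j
  simp only [rcon_eq_pushforward] at hdef ⊢
  refine ⟨Seminorm.pushforward_nonneg _ _ _, ⟨hdef, fun h => ?_⟩,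
    fun c => Seminorm.pushforward_smul _ _ c Θ, Seminorm.pushforward_add_le _ _
      (mem_range_symmetrizeLinearMap hΘ) (mem_range_symmetrizeLinearMap hΦ)⟩
  rw [funext h]
  exact Seminorm.pushforward_zero _ _

/-- For K ≥ 1, p ≥ 1 and q ∈ [1,∞], the RCON Ω_q is a norm on
K-tuples of symmetric p×p real matrices: nonnegativity, definiteness,
absolute homogeneity, and the triangle inequality. -/
theorem rcon_is_norm (K p : ℕ) (hK : 1 ≤ K) (hp : 1 ≤ p)
    (q : ℝ≥0∞) (hq : 1 ≤ q)
    (Θ Φ : Fin K → Matrix (Fin p) (Fin p) ℝ)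
    (hΘ : ∀ k, (Θ k).IsSymm) (hΦ : ∀ k, (Φ k).IsSymm) :
    0 ≤ rcon q K p Θ ∧
    (rcon q K p Θ = 0 ↔ ∀ k, Θ k = 0) ∧
    (∀ c : ℝ, rcon q K p (fun k => c • Θ k) = |c| * rcon q K p Θ) ∧
    rcon q K p (fun k => Θ k + Φ k) ≤ rcon q K p Θ + rcon q K p Φ :=
  rcon_is_norm_general K p q hq Θ Φ hΘ hΦ
end

section
/- Let N be a norm on (Kp)×p real matrices that is symmetric in its argument in the blockwise sense: N([V¹;…;Vᴷ]) = N([(V¹)ᵀ;…;(Vᴷ)ᵀ]) for all V¹,…,Vᴷ ∈ ℝ^{p×p}. Define Ω_N(Θ¹,…,Θᴷ) = inf { N([V¹;…;Vᴷ]) : Vᵏ ∈ ℝ^{p×p}, Θᵏ = Vᵏ + (Vᵏ)ᵀ for k = 1,…,K }. Then for all symmetric p×p matrices Θ¹,…,Θᴷ, Ω_N(Θ¹,…,Θᴷ) = (1/2) N([Θ¹;…;Θᴷ]). -/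
open Matrix
open scoped BigOperators

/-- The (Kp)×p matrix obtained by stacking V¹,…,Vᴷ vertically. -/
def stack {K p : ℕ} (V : Fin K → Matrix (Fin p) (Fin p) ℝ) :
    Matrix (Fin K × Fin p) (Fin p) ℝ :=
  fun ki j => V ki.1 ki.2 j

/-- If N is a norm on (Kp)×p real matrices that is symmetric in the
blockwise sense, N([V¹;…;Vᴷ]) = N([(V¹)ᵀ;…;(Vᴷ)ᵀ]), then for all symmetric
p×p matrices Θ¹,…,Θᴷ the induced row-column overlap norm
Ω_N(Θ¹,…,Θᴷ) = inf { N([V¹;…;Vᴷ]) : Θᵏ = Vᵏ + (Vᵏ)ᵀ } equals (1/2) N([Θ¹;…;Θᴷ]). -/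
theorem rcon_of_symmetric_norm (K p : ℕ)
    (N : Matrix (Fin K × Fin p) (Fin p) ℝ → ℝ)
    (hN_nonneg : ∀ A, 0 ≤ N A)
    (hN_def : ∀ A, N A = 0 ↔ A = 0)
    (hN_hom : ∀ (c : ℝ) A, N (c • A) = |c| * N A)
    (hN_tri : ∀ A B, N (A + B) ≤ N A + N B)
    (hN_symm : ∀ V : Fin K → Matrix (Fin p) (Fin p) ℝ,
      N (stack V) = N (stack fun k => (V k)ᵀ))
    (Θ : Fin K → Matrix (Fin p) (Fin p) ℝ) (hΘ : ∀ k, (Θ k).IsSymm) :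
    sInf { r : ℝ | ∃ V : Fin K → Matrix (Fin p) (Fin p) ℝ,
        (∀ k, Θ k = V k + (V k)ᵀ) ∧ r = N (stack V) }
      = (1 / 2) * N (stack Θ) := by
  have hadd : ∀ V W : Fin K → Matrix (Fin p) (Fin p) ℝ,
      stack (fun k => V k + W k) = stack V + stack W := by
    intro V W; ext ⟨k, i⟩ j; rfl
  have hsmul : ∀ (c : ℝ) (V : Fin K → Matrix (Fin p) (Fin p) ℝ),
      stack (fun k => c • V k) = c • stack V := by
    intro c V; ext ⟨k, i⟩ j; rfl
  -- the half-Θ witness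
  have hmem : (N (stack fun k => (1/2 : ℝ) • Θ k)) ∈
      { r : ℝ | ∃ V : Fin K → Matrix (Fin p) (Fin p) ℝ,
        (∀ k, Θ k = V k + (V k)ᵀ) ∧ r = N (stack V) } := by
    refine ⟨fun k => (1/2 : ℝ) • Θ k, fun k => ?_, rfl⟩
    have hs : (Θ k)ᵀ = Θ k := (hΘ k)
    rw [Matrix.transpose_smul, hs]
    ext i j
    simp [Matrix.add_apply, Matrix.smul_apply]
    ring
  have hval : N (stack fun k => (1/2 : ℝ) • Θ k) = (1/2) * N (stack Θ) := by
    rw [hsmul, hN_hom]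
    norm_num
  have hne : { r : ℝ | ∃ V : Fin K → Matrix (Fin p) (Fin p) ℝ,
        (∀ k, Θ k = V k + (V k)ᵀ) ∧ r = N (stack V) }.Nonempty := ⟨_, hmem⟩
  have hlb : ∀ r ∈ { r : ℝ | ∃ V : Fin K → Matrix (Fin p) (Fin p) ℝ,
        (∀ k, Θ k = V k + (V k)ᵀ) ∧ r = N (stack V) },
      (1/2) * N (stack Θ) ≤ r := by
    rintro r ⟨V, hV, rfl⟩
    have hstack : stack Θ = stack V + stack (fun k => (V k)ᵀ) := by
      rw [← hadd]
      ext ⟨k, i⟩ j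
      simp [stack, hV k]
    have : N (stack Θ) ≤ 2 * N (stack V) := by
      rw [hstack]
      calc N (stack V + stack fun k => (V k)ᵀ)
          ≤ N (stack V) + N (stack fun k => (V k)ᵀ) := hN_tri _ _
        _ = 2 * N (stack V) := by rw [← hN_symm V]; ring
    linarith
  refine le_antisymm ?_ (le_csInf hne hlb)
  calc sInf _ ≤ N (stack fun k => (1/2 : ℝ) • Θ k) :=
        csInf_le ⟨_, fun r hr => hlb r hr⟩ hmem
    _ = (1/2) * N (stack Θ) := hval
end

section
/- For all integers K ≥ 1, p ≥ 1 and all symmetric p×p real matrices Θ¹,…,Θᴷ, the row-column overlap norm with q = 1 satisfies Ω₁(Θ¹,…,Θᴷ) = (1/2) Σ_{k=1}^K Σ_{i=1}^p Σ_{j=1}^p |Θᵏ_{ij}|. -/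
open Matrix
open scoped ENNReal BigOperators

lemma lqNorm_one_eq {ι : Type*} [Fintype ι] (x : ι → ℝ) :
    lqNorm 1 x = ∑ i, |x i| := by
  rw [lqNorm, PiLp.norm_eq_sum (by norm_num : 0 < (1 : ℝ≥0∞).toReal)]
  simp [Real.norm_eq_abs]

/-- For K ≥ 1, p ≥ 1 and symmetric p×p real matrices Θ¹,…,Θᴷ,
the RCON with q = 1 satisfies Ω₁(Θ¹,…,Θᴷ) = (1/2) Σ_k Σ_i Σ_j |Θᵏ_{ij}|. -/
theorem rcon_one_eq_half_l1 (K p : ℕ) (hK : 1 ≤ K) (hp : 1 ≤ p)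
    (Θ : Fin K → Matrix (Fin p) (Fin p) ℝ) (hΘ : ∀ k, (Θ k).IsSymm) :
    rcon 1 K p Θ = (1 / 2) * ∑ k : Fin K, ∑ i : Fin p, ∑ j : Fin p, |Θ k i j| := by
  set T : ℝ := (1 / 2) * ∑ k : Fin K, ∑ i : Fin p, ∑ j : Fin p, |Θ k i j| with hT
  -- every element of the set is ≥ T
  have hlb : ∀ r ∈ { r : ℝ | ∃ V : Fin K → Matrix (Fin p) (Fin p) ℝ,
      (∀ k, Θ k = V k + (V k)ᵀ) ∧
      r = ∑ j : Fin p, lqNorm 1 (fun ki : Fin K × Fin p => V ki.1 ki.2 j) }, T ≤ r := by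
    rintro r ⟨V, hV, rfl⟩
    have hre : (∑ j : Fin p, lqNorm 1 (fun ki : Fin K × Fin p => V ki.1 ki.2 j))
        = ∑ k : Fin K, ∑ i : Fin p, ∑ j : Fin p, |V k i j| := by
      simp only [lqNorm_one_eq, Fintype.sum_prod_type]
      rw [Finset.sum_comm]
      exact Finset.sum_congr rfl fun k _ => Finset.sum_comm
    rw [hre, hT]
    have key : ∑ k : Fin K, ∑ i : Fin p, ∑ j : Fin p, |Θ k i j|
        ≤ 2 * ∑ k : Fin K, ∑ i : Fin p, ∑ j : Fin p, |V k i j| := by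
      have h1 : ∑ k : Fin K, ∑ i : Fin p, ∑ j : Fin p, |Θ k i j|
          ≤ ∑ k : Fin K, ∑ i : Fin p, ∑ j : Fin p, (|V k i j| + |V k j i|) := by
        refine Finset.sum_le_sum fun k _ => Finset.sum_le_sum fun i _ =>
          Finset.sum_le_sum fun j _ => ?_
        have : Θ k i j = V k i j + V k j i := by
          rw [hV k]; simp [Matrix.add_apply, Matrix.transpose_apply]
        rw [this]; exact abs_add_le _ _
      have h2 : ∑ k : Fin K, ∑ i : Fin p, ∑ j : Fin p, (|V k i j| + |V k j i|)
          = 2 * ∑ k : Fin K, ∑ i : Fin p, ∑ j : Fin p, |V k i j| := by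
        simp only [Finset.sum_add_distrib]
        have h3 : ∑ k : Fin K, ∑ i : Fin p, ∑ j : Fin p, |V k j i|
            = ∑ k : Fin K, ∑ i : Fin p, ∑ j : Fin p, |V k i j| :=
          Finset.sum_congr rfl fun k _ => Finset.sum_comm
        rw [h3]; ring
      linarith
    linarith
  refine le_antisymm ?_ (le_csInf ⟨_, fun k => (1/2 : ℝ) • Θ k, fun k => ?_, rfl⟩ hlb)
  · -- rcon ≤ T : the witness V = (1/2)Θ achieves T
    apply csInf_le ⟨T, hlb⟩
    refine ⟨fun k => (1/2 : ℝ) • Θ k, fun k => ?_, ?_⟩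
    · have hs : ((1/2 : ℝ) • Θ k)ᵀ = (1/2 : ℝ) • Θ k := by
        rw [Matrix.transpose_smul, (hΘ k).eq]
      rw [hs]; ext i j; simp [Matrix.add_apply]; ring
    · simp only [lqNorm_one_eq, Fintype.sum_prod_type]
      rw [hT, Finset.mul_sum]
      rw [Finset.sum_comm]
      refine Finset.sum_congr rfl fun k _ => ?_
      rw [Finset.mul_sum, Finset.sum_comm]
      refine Finset.sum_congr rfl fun i _ => ?_
      rw [Finset.mul_sum]
      refine Finset.sum_congr rfl fun j _ => ?_
      rw [Matrix.smul_apply, smul_eq_mul, abs_mul,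
        abs_of_nonneg (by norm_num : (0:ℝ) ≤ 1/2)]
  · have hs : ((1/2 : ℝ) • Θ k)ᵀ = (1/2 : ℝ) • Θ k := by
      rw [Matrix.transpose_smul, (hΘ k).eq]
    rw [hs]; ext i j; simp [Matrix.add_apply]; ring
end

section
/- Let K ≥ 1, n₁,…,n_K > 0, λ₁ ≥ 0, λ₂ ≥ 0, let S¹,…,Sᴷ be symmetric p×p real matrices, let (I₁,…,I_L) be a partition of {1,…,p}, and let T = ∪_{l=1}^L I_l × I_l. Let h be a real-valued function on K-tuples of p×p real matrices such that h(Θ¹,…,Θᴷ) > h(Θ¹_T,…,Θᴷ_T) for any K-tuple of matrices Θ¹,…,Θᴷ whose combined support strictly contains T (i.e., each Θᵏ_T ≠ Θᵏ for at least one k while considering the restrictions to T). If n_k|Sᵏ_{ij}| ≤ λ₁ for all (i,j) ∈ T^c and all k = 1,…,K, then every K-tuple (Θ̂¹,…,Θ̂ᴷ) of symmetric positive definite p×p matrices minimizing F(Θ¹,…,Θᴷ) = Σ_{k=1}^K n_k(−log det Θᵏ + trace(SᵏΘᵏ)) + λ₁ Σ_{k=1}^K Σ_{i,j}|Θᵏ_{ij}|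 + λ₂ h(Θ¹,…,Θᴷ) over all K-tuples of symmetric positive definite matrices has the property that each Θ̂ᵏ is supported on T. -/
open Matrix
open scoped BigOperators

/-- The restriction of a K-tuple of p×p matrices to T = ∪_l I_l × I_l:
entries with indices in T are retained, all other entries are set to zero. -/
def restrT {K p L : ℕ} (I : Fin L → Finset (Fin p))
    (Θ : Fin K → Matrix (Fin p) (Fin p) ℝ) :
    Fin K → Matrix (Fin p) (Fin p) ℝ :=
  fun k => Matrix.of fun i j => if ∃ l, i ∈ I l ∧ j ∈ I l then Θ k i j else 0

/-- A generic joint graphical-model objective with regularizer h: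
Σ_k n_k(−log det Θᵏ + trace(SᵏΘᵏ)) + λ₁ Σ_k Σ_{i,j}|Θᵏ_{ij}| + λ₂ h(Θ¹,…,Θᴷ). -/
noncomputable def genObj {K p : ℕ} (n : Fin K → ℝ) (lam₁ lam₂ : ℝ)
    (S : Fin K → Matrix (Fin p) (Fin p) ℝ)
    (h : (Fin K → Matrix (Fin p) (Fin p) ℝ) → ℝ)
    (Θ : Fin K → Matrix (Fin p) (Fin p) ℝ) : ℝ :=
  (∑ k : Fin K, n k * (-Real.log (Θ k).det + (S k * Θ k).trace))
    + lam₁ * (∑ k : Fin K, ∑ i : Fin p, ∑ j : Fin p, |Θ k i j|)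
    + lam₂ * h Θ

/-!
Replace a minimizer Θ by its block-diagonal part Ψ = Θ_T. Each Ψᵏ is still positive definite,
and no term of the objective increases: the penalty by the assumption on h; the trace and ℓ₁ terms
entry by entry, because off T the gain λ₁|Θᵏᵢⱼ| dominates n_k Sᵏᵢⱼ Θᵏⱼᵢ; and −log det by
Fischer's inequality det Θᵏ ≤ det Ψᵏ, which is strict when Ψᵏ ≠ Θᵏ. As λ₂ may vanish, it is
this strict inequality that makes Ψ ≠ Θ contradict minimality.

Fischer's inequality: (Ψᵏ)⁻¹ is again block diagonal, so tr((Ψᵏ)⁻¹Θᵏ) = tr((Ψᵏ)⁻¹Ψᵏ) = p. For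
positive definite A, B with tr(B⁻¹A) = p, the eigenvalues μ of B^{-1/2} A B^{-1/2} sum to p, so
log (det A / det B) = Σ log μ ≤ Σ (μ - 1) = 0, with equality only if all μ = 1, i.e. A = B.
-/

namespace Matrix

section DetComparison

variable {n : Type*} [Fintype n] [DecidableEq n]

theorem PosDef.det_lt_one_of_trace_eq_card {M : Matrix n n ℝ} (hM : M.PosDef)
    (htr : M.trace = Fintype.card n) (hne : M ≠ 1) : M.det < 1 := by
  set μ := hM.isHermitian.eigenvalues
  have hμ : ∀ i, 0 < μ i := hM.eigenvalues_pos
  obtain ⟨i₀, hi₀⟩ : ∃ i, μ i ≠ 1 := by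
    by_contra! h
    refine hne (CFC.eq_one_of_spectrum_subset_one (R := ℝ) M ?_ hM.isHermitian.isSelfAdjoint)
    rw [hM.isHermitian.spectrum_real_eq_range_eigenvalues]
    rintro _ ⟨i, rfl⟩
    exact h i
  have hsum : ∑ i, (μ i - 1) = 0 := by
    have : M.trace = ∑ i, μ i := by simpa using hM.isHermitian.trace_eq_sum_eigenvalues
    simp [Finset.sum_sub_distrib, ← this, htr]
  have hlog : Real.log M.det < 0 := calc
    Real.log M.det = ∑ i, Real.log (μ i) := by
      rw [hM.isHermitian.det_eq_prod_eigenvalues]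
      simpa using Real.log_prod (fun i _ => (hμ i).ne')
    _ < ∑ i, (μ i - 1) := Finset.sum_lt_sum (fun i _ => Real.log_le_sub_one_of_pos (hμ i))
        ⟨i₀, Finset.mem_univ _, Real.log_lt_sub_one_of_pos (hμ i₀) hi₀⟩
    _ = 0 := hsum
  exact (Real.log_neg_iff hM.det_pos).mp hlog

open scoped MatrixOrder in
theorem PosDef.det_lt_det_of_trace_inv_mul_eq_card {A B : Matrix n n ℝ} (hA : A.PosDef)
    (hB : B.PosDef) (htr : (B⁻¹ * A).trace = Fintype.card n) (hne : A ≠ B) :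
    A.det < B.det := by
  set s := CFC.sqrt B⁻¹
  have hss : s * s = B⁻¹ := CFC.sqrt_mul_sqrt_self _ hB.inv.posSemidef.nonneg
  have hsH : sᴴ = s := (CFC.sqrt_nonneg B⁻¹).posSemidef.isHermitian.eq
  have hs : IsUnit s := isUnit_of_mul_isUnit_left (hss ▸ hB.inv.isUnit)
  have hM : (s * A * s).PosDef := by
    have := hA.mul_mul_conjTranspose_same (vecMul_injective_iff_isUnit.mpr hs)
    rwa [hsH] at this
  have hneM : s * A * s ≠ 1 := fun h ↦ hne <| by
    have hBA : B⁻¹ * A = 1 := by rw [← hss, mul_assoc]; exact mul_eq_one_comm.mp h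
    rw [← mul_nonsing_inv_cancel_left B A hB.det_pos.ne'.isUnit, hBA, mul_one]
  have hdetM : (s * A * s).det = A.det / B.det := by
    rw [det_mul, det_mul, mul_right_comm, ← det_mul, hss, det_nonsing_inv,
      Ring.inverse_eq_inv', inv_mul_eq_div]
  have := hM.det_lt_one_of_trace_eq_card (by rw [trace_mul_cycle, hss, htr]) hneM
  rwa [hdetM, div_lt_one hB.det_pos] at this

end DetComparison

section BlockDiagonalPart

variable {n β R : Type*} [DecidableEq β]

/-- `A_T` for `T = {(i, j) | c i = c j}`: the label `c i` names the block containing `i`. -/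
def blockDiagonalPart [Zero R] (c : n → β) (A : Matrix n n R) : Matrix n n R :=
  of fun i j ↦ if c i = c j then A i j else 0

theorem blockDiagonalPart_blockDiagonalPart [Zero R] (c : n → β) (A : Matrix n n R) :
    blockDiagonalPart c (blockDiagonalPart c A) = blockDiagonalPart c A := by
  ext i j
  by_cases hij : c i = c j <;> simp [blockDiagonalPart, hij]

variable [Fintype n]

theorem trace_mul_blockDiagonalPart [CommSemiring R] (c : n → β) (X A : Matrix n n R) :
    (X * blockDiagonalPart c A).trace = (blockDiagonalPart c X * A).trace := by
  simp only [trace, diag, mul_apply, blockDiagonalPart, of_apply, mul_ite, ite_mul, mul_zero,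
    zero_mul, eq_comm]

theorem trace_mul_blockDiagonalPart_add_sum_abs_le {c : n → β} {S : Matrix n n ℝ}
    {lam : ℝ} (hS : ∀ i j, c i ≠ c j → |S i j| ≤ lam) (X : Matrix n n ℝ) :
    (S * blockDiagonalPart c X).trace + lam * ∑ i, ∑ j, |blockDiagonalPart c X i j| ≤
      (S * X).trace + lam * ∑ i, ∑ j, |X i j| := by
  have hsum : ∀ Y : Matrix n n ℝ, (S * Y).trace + lam * ∑ i, ∑ j, |Y i j| =
      ∑ i, ∑ j, (Y i j * S j i + lam * |Y i j|) := fun Y ↦ by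
    rw [trace_mul_comm]
    simp only [trace, diag, mul_apply, Finset.mul_sum, ← Finset.sum_add_distrib]
  rw [hsum, hsum]
  refine Finset.sum_le_sum fun i _ ↦ Finset.sum_le_sum fun j _ ↦ ?_
  by_cases hij : c i = c j
  · simp [blockDiagonalPart, hij]
  · have : |X i j * S j i| ≤ lam * |X i j| := by
      rw [abs_mul, mul_comm]
      exact mul_le_mul_of_nonneg_right (hS j i (Ne.symm hij)) (abs_nonneg _)
    simp only [blockDiagonalPart, of_apply, hij, if_false, zero_mul, abs_zero, mul_zero, add_zero]
    linarith [neg_abs_le (X i j * S j i)]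

variable [DecidableEq n]

def blockProj [Zero R] [One R] (c : n → β) (b : β) : Matrix n n R :=
  diagonal fun i ↦ if c i = b then 1 else 0

theorem blockDiagonalPart_eq_sum [Fintype β] [NonAssocSemiring R] (c : n → β)
    (A : Matrix n n R) : blockDiagonalPart c A = ∑ b, blockProj c b * A * blockProj c b := by
  ext i j
  simp [blockDiagonalPart, blockProj, sum_apply, diagonal_mul, mul_diagonal, ite_mul, mul_ite]

theorem blockDiagonalPart_eq_self_iff [NonAssocSemiring R] {c : n → β} {A : Matrix n n R} :
    blockDiagonalPart c A = A ↔ ∀ b, Commute (blockProj c b) A := by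
  constructor
  · rintro hA b
    rw [← hA]
    ext i j
    by_cases hij : c i = c j <;>
      simp [blockDiagonalPart, blockProj, diagonal_mul, mul_diagonal, hij]
  · intro h
    ext i j
    have := congr_fun (congr_fun (h (c i)).eq i) j
    by_cases hij : c i = c j <;>
      simp_all [blockDiagonalPart, blockProj, diagonal_mul, mul_diagonal, eq_comm]

theorem Commute.nonsing_inv_right [CommRing R] {P A : Matrix n n R} (h : Commute P A) :
    Commute P A⁻¹ := by
  by_cases hA : IsUnit A
  · simpa using h.units_inv_right (u := hA.unit)
  · rw [nonsing_inv_eq_ringInverse, Ring.inverse_non_unit _ hA]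
    exact Commute.zero_right P

theorem blockDiagonalPart_nonsing_inv [CommRing R] {c : n → β} {A : Matrix n n R}
    (hA : blockDiagonalPart c A = A) : blockDiagonalPart c A⁻¹ = A⁻¹ :=
  blockDiagonalPart_eq_self_iff.mpr fun b ↦
    (blockDiagonalPart_eq_self_iff.mp hA b).nonsing_inv_right

open scoped ComplexOrder in
theorem PosDef.blockDiagonalPart {𝕜 : Type*} [RCLike 𝕜] [Fintype β] {A : Matrix n n 𝕜}
    (hA : A.PosDef) (c : n → β) : (Matrix.blockDiagonalPart c A).PosDef := by
  have hP : ∀ b, (blockProj c b : Matrix n n 𝕜)ᴴ = blockProj c b := fun b ↦ by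
    simp [blockProj, diagonal_conjTranspose, apply_ite]
  have hquad : ∀ x, star x ⬝ᵥ Matrix.blockDiagonalPart c A *ᵥ x =
      ∑ b, star (blockProj c b *ᵥ x) ⬝ᵥ A *ᵥ (blockProj c b *ᵥ x) := fun x ↦ by
    simp only [blockDiagonalPart_eq_sum, sum_mulVec, dotProduct_sum, star_mulVec, hP,
      dotProduct_mulVec, vecMul_vecMul, mulVec_mulVec, Matrix.mul_assoc]
  refine of_dotProduct_mulVec_pos ?_ fun x hx ↦ ?_
  · rw [blockDiagonalPart_eq_sum]
    refine isSelfAdjoint_sum _ fun b _ ↦ ?_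
    simpa [hP] using
      (isHermitian_conjTranspose_mul_mul (blockProj c b) hA.isHermitian).isSelfAdjoint
  · obtain ⟨i, hi⟩ := Function.ne_iff.mp hx
    rw [hquad]
    refine Finset.sum_pos' (fun b _ ↦ hA.posSemidef.dotProduct_mulVec_nonneg _)
      ⟨c i, Finset.mem_univ _, hA.dotProduct_mulVec_pos fun h ↦ hi ?_⟩
    simpa [blockProj, mulVec_diagonal] using congr_fun h i

theorem PosDef.det_lt_det_blockDiagonalPart [Fintype β] {A : Matrix n n ℝ} (hA : A.PosDef)
    {c : n → β} (hne : Matrix.blockDiagonalPart c A ≠ A) :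
    A.det < (Matrix.blockDiagonalPart c A).det := by
  have hB := hA.blockDiagonalPart c
  have hBinv := blockDiagonalPart_nonsing_inv (blockDiagonalPart_blockDiagonalPart c A)
  refine hA.det_lt_det_of_trace_inv_mul_eq_card hB ?_ hne.symm
  rw [← hBinv, ← trace_mul_blockDiagonalPart, nonsing_inv_mul _ hB.det_pos.ne'.isUnit,
    trace_one]

theorem PosDef.det_le_det_blockDiagonalPart [Fintype β] {A : Matrix n n ℝ} (hA : A.PosDef)
    (c : n → β) : A.det ≤ (Matrix.blockDiagonalPart c A).det := by
  by_cases hne : Matrix.blockDiagonalPart c A = A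
  · rw [hne]
  · exact (hA.det_lt_det_blockDiagonalPart hne).le

end BlockDiagonalPart

end Matrix

theorem genObj_blockDiagonalPart_lt {K p : ℕ} {β : Type*} [Fintype β] [DecidableEq β]
    {n : Fin K → ℝ} (hn : ∀ k, 0 < n k) {lam₁ lam₂ : ℝ} (hlam₂ : 0 ≤ lam₂)
    {S : Fin K → Matrix (Fin p) (Fin p) ℝ} {c : Fin p → β}
    (hS : ∀ k i j, c i ≠ c j → n k * |S k i j| ≤ lam₁)
    {h : (Fin K → Matrix (Fin p) (Fin p) ℝ) → ℝ} {Θ : Fin K → Matrix (Fin p) (Fin p) ℝ}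
    (hΘ : ∀ k, (Θ k).PosDef) (hh : h (fun k ↦ blockDiagonalPart c (Θ k)) ≤ h Θ)
    (hne : (fun k ↦ blockDiagonalPart c (Θ k)) ≠ Θ) :
    genObj n lam₁ lam₂ S h (fun k ↦ blockDiagonalPart c (Θ k)) <
      genObj n lam₁ lam₂ S h Θ := by
  set Ψ := fun k ↦ blockDiagonalPart c (Θ k)
  have hsplit : ∀ X : Fin K → Matrix (Fin p) (Fin p) ℝ, genObj n lam₁ lam₂ S h X =
      ∑ k, (n k * -Real.log (X k).det +
        ((n k • S k * X k).trace + lam₁ * ∑ i, ∑ j, |X k i j|)) + lam₂ * h X := by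
    intro X
    simp only [genObj, smul_mul, trace_smul, smul_eq_mul, mul_add, Finset.mul_sum,
      Finset.sum_add_distrib]
    ring
  have hlin : ∀ k, (n k • S k * Ψ k).trace + lam₁ * ∑ i, ∑ j, |Ψ k i j| ≤
      (n k • S k * Θ k).trace + lam₁ * ∑ i, ∑ j, |Θ k i j| := fun k ↦
    trace_mul_blockDiagonalPart_add_sum_abs_le (fun i j hij ↦ by
      simpa [abs_mul, abs_of_pos (hn k)] using hS k i j hij) (Θ k)
  have hlogdet : ∀ k, n k * -Real.log (Ψ k).det ≤ n k * -Real.log (Θ k).det := fun k ↦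
    mul_le_mul_of_nonneg_left (neg_le_neg (Real.log_le_log (hΘ k).det_pos
      ((hΘ k).det_le_det_blockDiagonalPart c))) (hn k).le
  obtain ⟨k₀, hk₀⟩ := Function.ne_iff.mp hne
  have hlogdet₀ : n k₀ * -Real.log (Ψ k₀).det < n k₀ * -Real.log (Θ k₀).det :=
    mul_lt_mul_of_pos_left (neg_lt_neg (Real.log_lt_log (hΘ k₀).det_pos
      ((hΘ k₀).det_lt_det_blockDiagonalPart hk₀))) (hn k₀)
  have hsum := Finset.sum_lt_sum (fun k _ ↦ add_le_add (hlogdet k) (hlin k))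
    ⟨k₀, Finset.mem_univ _, add_lt_add_of_lt_of_le hlogdet₀ (hlin k₀)⟩
  rw [hsplit, hsplit]
  linarith [mul_le_mul_of_nonneg_left hh hlam₂]

theorem restrT_eq_blockDiagonalPart {K p L : ℕ} {I : Fin L → Finset (Fin p)}
    {blk : Fin p → Fin L} (hT : ∀ i j, (∃ l, i ∈ I l ∧ j ∈ I l) ↔ blk i = blk j)
    (Θ : Fin K → Matrix (Fin p) (Fin p) ℝ) :
    restrT I Θ = fun k ↦ blockDiagonalPart blk (Θ k) := by
  funext k
  ext i j
  simp [restrT, blockDiagonalPart, hT]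

theorem generic_sufficient_general (K p L : ℕ)
    (n : Fin K → ℝ) (hn : ∀ k, 0 < n k)
    (lam₁ lam₂ : ℝ) (hlam₂ : 0 ≤ lam₂)
    (S : Fin K → Matrix (Fin p) (Fin p) ℝ)
    (I : Fin L → Finset (Fin p)) (hpart : ∀ i : Fin p, ∃! l, i ∈ I l)
    (h : (Fin K → Matrix (Fin p) (Fin p) ℝ) → ℝ)
    (hh : ∀ Θ : Fin K → Matrix (Fin p) (Fin p) ℝ,
      restrT I Θ ≠ Θ → h (restrT I Θ) < h Θ)
    (hcond : ∀ k, ∀ i j : Fin p, ¬ (∃ l, i ∈ I l ∧ j ∈ I l) →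
      n k * |S k i j| ≤ lam₁)
    (Θ : Fin K → Matrix (Fin p) (Fin p) ℝ) (hΘ : ∀ k, (Θ k).PosDef)
    (hmin : ∀ Ψ : Fin K → Matrix (Fin p) (Fin p) ℝ, (∀ k, (Ψ k).PosDef) →
      genObj n lam₁ lam₂ S h Θ ≤ genObj n lam₁ lam₂ S h Ψ) :
    ∀ k, ∀ i j : Fin p, ¬ (∃ l, i ∈ I l ∧ j ∈ I l) → Θ k i j = 0 := by
  choose blk hblk huniq using hpart
  have hI : ∀ i l, i ∈ I l ↔ blk i = l := fun i l ↦
    ⟨fun h ↦ (huniq i l h).symm, fun h ↦ h ▸ hblk i⟩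
  have hT : ∀ i j, (∃ l, i ∈ I l ∧ j ∈ I l) ↔ blk i = blk j := by simp [hI, eq_comm]
  have hrestr := restrT_eq_blockDiagonalPart hT Θ
  have hfix : restrT I Θ = Θ := by
    by_contra hne
    have hlt := genObj_blockDiagonalPart_lt hn hlam₂
      (fun k i j hij ↦ hcond k i j ((hT i j).not.mpr hij)) hΘ (hrestr ▸ (hh Θ hne).le)
      (hrestr ▸ hne)
    exact (hmin _ fun k ↦ (hΘ k).blockDiagonalPart blk).not_gt hlt
  intro k i j hij
  rw [← hfix]
  simp [restrT, hij]

/-- Theorem 6, general sufficient condition: let h be a penalty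
satisfying h(Θ¹,…,Θᴷ) > h(Θ¹_T,…,Θᴷ_T) whenever the support of (Θ¹,…,Θᴷ)
strictly contains T = ∪_l I_l × I_l. If n_k|Sᵏ_{ij}| ≤ λ₁ for all (i,j) ∈ T^c
and all k, then every K-tuple of symmetric positive definite matrices
minimizing the objective is supported on T. -/
theorem generic_sufficient (K p L : ℕ) (hK : 1 ≤ K)
    (n : Fin K → ℝ) (hn : ∀ k, 0 < n k)
    (lam₁ lam₂ : ℝ) (hlam₁ : 0 ≤ lam₁) (hlam₂ : 0 ≤ lam₂)
    (S : Fin K → Matrix (Fin p) (Fin p) ℝ) (hS : ∀ k, (S k).IsSymm)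
    (I : Fin L → Finset (Fin p)) (hpart : ∀ i : Fin p, ∃! l, i ∈ I l)
    (h : (Fin K → Matrix (Fin p) (Fin p) ℝ) → ℝ)
    (hh : ∀ Θ : Fin K → Matrix (Fin p) (Fin p) ℝ,
      restrT I Θ ≠ Θ → h (restrT I Θ) < h Θ)
    (hcond : ∀ k, ∀ i j : Fin p, ¬ (∃ l, i ∈ I l ∧ j ∈ I l) →
      n k * |S k i j| ≤ lam₁)
    (Θ : Fin K → Matrix (Fin p) (Fin p) ℝ) (hΘ : ∀ k, (Θ k).PosDef)
    (hmin : ∀ Ψ : Fin K → Matrix (Fin p) (Fin p) ℝ, (∀ k, (Ψ k).PosDef) →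
      genObj n lam₁ lam₂ S h Θ ≤ genObj n lam₁ lam₂ S h Ψ) :
    ∀ k, ∀ i j : Fin p, ¬ (∃ l, i ∈ I l ∧ j ∈ I l) → Θ k i j = 0 :=
  generic_sufficient_general K p L n hn lam₁ lam₂ hlam₂ S I hpart h hh hcond Θ hΘ hmin
end

section
/- Let A be a symmetric p×p real matrix with eigendecomposition A = U D Uᵀ, where U is orthogonal and D is diagonal; let n > 0 and ρ > 0. Then the matrix Θ* = (1/2) U (D + (D² + (2n/ρ) I)^{1/2}) Uᵀ, where (D² + (2n/ρ)I)^{1/2} is the diagonal matrix of the (positive) square roots of the diagonal entries of D² + (2n/ρ)I, is symmetric positive definite, and it is the unique minimizer over symmetric positive definite p×p matrices Θ of the function Θ ↦ −n log det Θ + ρ ‖Θ − A‖_F², where ‖·‖_F is the Frobenius norm. -/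
/-! Conjugation by the orthogonal `U` preserves the determinant, the sum of squared entries and
positive definiteness, so we may assume `A = diagonal d`, and then `Θ* = diagonal θ`. Concavity of
`log det` gives `log det Θ ≤ ∑ log θ i + ∑ (Θ i i / θ i - 1)` for positive definite `Θ`. Expanding
`‖Θ - diagonal d‖²` around `diagonal θ`, the first-order terms cancel against this tangent bound
exactly because `2ρ θ i (θ i - d i) = n`, which leaves
`f Θ ≥ f Θ* + ρ ‖Θ - Θ*‖²` for the objective `f`. -/

open Matrix

namespace Matrix

section SumSq

variable {ι κ : Type*} [Fintype ι] [Fintype κ]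

lemma sum_sq_entries_eq_trace_transpose_mul (M : Matrix ι κ ℝ) :
    ∑ i, ∑ j, M i j ^ 2 = (Mᵀ * M).trace := by
  simp only [trace, diag, mul_apply, transpose_apply, sq]
  exact Finset.sum_comm

lemma sum_sq_entries_pos {M : Matrix ι κ ℝ} (hM : M ≠ 0) : 0 < ∑ i, ∑ j, M i j ^ 2 := by
  refine (Finset.sum_nonneg fun i _ => Finset.sum_nonneg fun j _ => sq_nonneg _).lt_of_ne ?_
  rw [sum_sq_entries_eq_trace_transpose_mul, ← conjTranspose_eq_transpose_of_trivial]
  exact fun h => hM (trace_conjTranspose_mul_self_eq_zero_iff.mp h.symm)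

end SumSq

variable {ι : Type*} [Fintype ι] [DecidableEq ι]

lemma sum_sq_entries_conj_orthogonal {U : Matrix ι ι ℝ} (hU : Uᵀ * U = 1) (M : Matrix ι ι ℝ) :
    ∑ i, ∑ j, (U * M * Uᵀ) i j ^ 2 = ∑ i, ∑ j, M i j ^ 2 := by
  have : (U * M * Uᵀ)ᵀ * (U * M * Uᵀ) = U * (Mᵀ * M) * Uᵀ := by
    simp only [transpose_mul, transpose_transpose, Matrix.mul_assoc]
    rw [← Matrix.mul_assoc Uᵀ U, hU, Matrix.one_mul]
  rw [sum_sq_entries_eq_trace_transpose_mul, sum_sq_entries_eq_trace_transpose_mul, this,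
    trace_mul_cycle, hU, Matrix.one_mul]

lemma sum_sq_entries_sub_diagonal (M : Matrix ι ι ℝ) (v : ι → ℝ) :
    ∑ i, ∑ j, (M i j - diagonal v i j) ^ 2
      = ∑ i, ∑ j, (M i j - diagonal M.diag i j) ^ 2 + ∑ i, (M i i - v i) ^ 2 := by
  rw [← Finset.sum_add_distrib]
  refine Finset.sum_congr rfl fun i _ => ?_
  rw [Fintype.sum_eq_add_sum_compl i, Fintype.sum_eq_add_sum_compl i]
  have hoff : ∀ j ∈ ({i}ᶜ : Finset ι), diagonal v i j = diagonal M.diag i j := fun j hj => by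
    have hij : i ≠ j := by simpa [eq_comm] using hj
    rw [diagonal_apply_ne _ hij, diagonal_apply_ne _ hij]
  simp only [diagonal_apply_eq, diag_apply, sub_self]
  rw [Finset.sum_congr rfl fun j hj => by rw [hoff j hj]]
  ring

lemma det_conj_orthogonal {U : Matrix ι ι ℝ} (hU : Uᵀ * U = 1) (M : Matrix ι ι ℝ) :
    (U * M * Uᵀ).det = M.det := by
  have hdet : Uᵀ.det * U.det = 1 := by rw [← det_mul, hU, det_one]
  rw [det_mul, det_mul]
  linear_combination M.det * hdet

lemma posDef_conj_orthogonal_iff {U M : Matrix ι ι ℝ} (hU : Uᵀ * U = 1) :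
    (U * M * Uᵀ).PosDef ↔ M.PosDef := by
  simpa [star_eq_conjTranspose] using
    IsUnit.posDef_star_right_conjugate_iff (x := M) (IsUnit.of_mul_eq_one_right Uᵀ hU)

lemma PosDef.log_det_le_trace_sub_card {C : Matrix ι ι ℝ} (hC : C.PosDef) :
    Real.log C.det ≤ C.trace - Fintype.card ι := by
  have hpos := hC.eigenvalues_pos
  have hdet : C.det = ∏ i, hC.1.eigenvalues i := by simpa using hC.1.det_eq_prod_eigenvalues
  have htr : C.trace = ∑ i, hC.1.eigenvalues i := by simpa using hC.1.trace_eq_sum_eigenvalues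
  rw [hdet, htr, Real.log_prod fun i _ => (hpos i).ne']
  calc ∑ i, Real.log (hC.1.eigenvalues i) ≤ ∑ i, (hC.1.eigenvalues i - 1) :=
        Finset.sum_le_sum fun i _ => Real.log_le_sub_one_of_pos (hpos i)
    _ = _ := by simp [Finset.sum_sub_distrib]

lemma PosDef.log_det_le_tangent_diagonal {Θ : Matrix ι ι ℝ} (hΘ : Θ.PosDef) {θ : ι → ℝ}
    (hθ : ∀ i, 0 < θ i) :
    Real.log Θ.det ≤ ∑ i, Real.log (θ i) + ∑ i, (Θ i i / θ i - 1) := by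
  set r : ι → ℝ := fun i => (Real.sqrt (θ i))⁻¹
  have hr : ∀ i, r i ^ 2 = (θ i)⁻¹ := fun i => by
    rw [inv_pow, Real.sq_sqrt (hθ i).le]
  have hr0 : ∀ i, r i ≠ 0 := fun i => inv_ne_zero (Real.sqrt_ne_zero'.mpr (hθ i))
  have hC : (diagonal r * Θ * diagonal r).PosDef := by
    have hunit : IsUnit (diagonal r) :=
      isUnit_diagonal.mpr (Pi.isUnit_iff.mpr fun i => (hr0 i).isUnit)
    simpa [star_eq_conjTranspose] using
      (IsUnit.posDef_star_right_conjugate_iff (x := Θ) hunit).mpr hΘ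
  have hdet : (diagonal r * Θ * diagonal r).det = (∏ i, (θ i)⁻¹) * Θ.det := by
    simp only [det_mul, det_diagonal, ← hr, Finset.prod_pow]
    ring
  have htrace : (diagonal r * Θ * diagonal r).trace = ∑ i, Θ i i / θ i := by
    simp only [trace, diag, mul_diagonal, diagonal_mul]
    exact Finset.sum_congr rfl fun i _ => by rw [div_eq_mul_inv, ← hr]; ring
  have hlog := hC.log_det_le_trace_sub_card
  rw [hdet, htrace, Real.log_mul (Finset.prod_ne_zero_iff.mpr fun i _ => inv_ne_zero (hθ i).ne')
    hΘ.det_pos.ne', Real.log_prod fun i _ => inv_ne_zero (hθ i).ne'] at hlog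
  simp only [Real.log_inv, Finset.sum_neg_distrib] at hlog
  simp only [Finset.sum_sub_distrib, Finset.sum_const, Finset.card_univ, nsmul_eq_mul, mul_one]
  linarith

end Matrix

noncomputable def expandObjective {ι : Type*} [Fintype ι] [DecidableEq ι] (n ρ : ℝ)
    (A Θ : Matrix ι ι ℝ) : ℝ :=
  -n * Real.log Θ.det + ρ * ∑ i, ∑ j, (Θ i j - A i j) ^ 2

/-- The positive root `θ` of `2 ρ θ (θ - d) = n`. -/
noncomputable def expandRoot (n ρ d : ℝ) : ℝ := (d + Real.sqrt (d ^ 2 + 2 * n / ρ)) / 2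

section Objective

variable {ι : Type*} [Fintype ι] [DecidableEq ι] {n ρ : ℝ}

lemma expandObjective_conj_orthogonal {U : Matrix ι ι ℝ} (hU : Uᵀ * U = 1)
    (A Θ : Matrix ι ι ℝ) :
    expandObjective n ρ (U * A * Uᵀ) (U * Θ * Uᵀ) = expandObjective n ρ A Θ := by
  have hsub : U * Θ * Uᵀ - U * A * Uᵀ = U * (Θ - A) * Uᵀ := by
    rw [Matrix.mul_sub, Matrix.sub_mul]
  unfold expandObjective
  simp only [← Matrix.sub_apply]
  rw [hsub, det_conj_orthogonal hU, sum_sq_entries_conj_orthogonal hU]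

lemma expandObjective_diagonal_add_le (hn : 0 ≤ n) {Θ : Matrix ι ι ℝ} (hΘ : Θ.PosDef)
    {d θ : ι → ℝ} (hθ : ∀ i, 0 < θ i) (hstat : ∀ i, 2 * ρ * θ i * (θ i - d i) = n) :
    expandObjective n ρ (diagonal d) (diagonal θ) + ρ * ∑ i, ∑ j, (Θ i j - diagonal θ i j) ^ 2
      ≤ expandObjective n ρ (diagonal d) Θ := by
  have hlog := mul_le_mul_of_nonneg_left (hΘ.log_det_le_tangent_diagonal hθ) hn
  have hcross : ρ * ∑ i, (Θ i i - d i) ^ 2 - ρ * ∑ i, (Θ i i - θ i) ^ 2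
      - n * ∑ i, (Θ i i / θ i - 1) = ρ * ∑ i, (θ i - d i) ^ 2 := by
    simp only [Finset.mul_sum, ← Finset.sum_sub_distrib]
    refine Finset.sum_congr rfl fun i _ => ?_
    rw [← hstat i]
    field_simp [(hθ i).ne']
    ring
  unfold expandObjective
  rw [sum_sq_entries_sub_diagonal Θ d, sum_sq_entries_sub_diagonal Θ θ,
    sum_sq_entries_sub_diagonal (diagonal θ) d, det_diagonal,
    Real.log_prod fun i _ => (hθ i).ne']
  simp only [diag_diagonal, diagonal_apply_eq, sub_self, ne_eq, OfNat.ofNat_ne_zero,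
    not_false_eq_true, zero_pow, Finset.sum_const_zero, zero_add]
  linarith

lemma expandRoot_pos (hn : 0 < n) (hρ : 0 < ρ) (d : ℝ) : 0 < expandRoot n ρ d := by
  have h : -d < Real.sqrt (d ^ 2 + 2 * n / ρ) :=
    Real.lt_sqrt_of_sq_lt (by rw [neg_sq]; linarith [div_pos (mul_pos two_pos hn) hρ])
  unfold expandRoot
  linarith

lemma two_mul_expandRoot_mul_sub (hn : 0 ≤ n) (hρ : 0 < ρ) (d : ℝ) :
    2 * ρ * expandRoot n ρ d * (expandRoot n ρ d - d) = n := by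
  have hsq := Real.sq_sqrt (by positivity : 0 ≤ d ^ 2 + 2 * n / ρ)
  have hcancel : ρ * (2 * n / ρ) = 2 * n := by field_simp
  unfold expandRoot
  linear_combination (ρ / 2) * hsq + hcancel / 2

end Objective

theorem expand_minimizer_general (p : ℕ) (n ρ : ℝ) (hn : 0 < n) (hρ : 0 < ρ)
    (U : Matrix (Fin p) (Fin p) ℝ) (hU₁ : U * Uᵀ = 1) (hU₂ : Uᵀ * U = 1)
    (d : Fin p → ℝ) (A : Matrix (Fin p) (Fin p) ℝ)
    (hAdecomp : A = U * Matrix.diagonal d * Uᵀ)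
    (Θstar : Matrix (Fin p) (Fin p) ℝ)
    (hΘstar : Θstar = (1 / 2 : ℝ) •
      (U * Matrix.diagonal (fun i => d i + Real.sqrt ((d i) ^ 2 + 2 * n / ρ)) * Uᵀ)) :
    Θstar.IsSymm ∧ Θstar.PosDef ∧
    ∀ Θ : Matrix (Fin p) (Fin p) ℝ, Θ.PosDef → Θ ≠ Θstar →
      -n * Real.log Θstar.det
          + ρ * (∑ i : Fin p, ∑ j : Fin p, (Θstar i j - A i j) ^ 2)
        < -n * Real.log Θ.det
          + ρ * (∑ i : Fin p, ∑ j : Fin p, (Θ i j - A i j) ^ 2) := by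
  set θ : Fin p → ℝ := fun i => expandRoot n ρ (d i)
  have hθ : ∀ i, 0 < θ i := fun i => expandRoot_pos hn hρ (d i)
  have hΘstar' : Θstar = U * diagonal θ * Uᵀ := by
    rw [hΘstar, ← Matrix.smul_mul, ← Matrix.mul_smul, ← diagonal_smul]
    congr 3
    funext i
    simp [θ, expandRoot, div_eq_inv_mul]
  refine ⟨?_, ?_, fun Θ hΘ hne => ?_⟩
  · rw [hΘstar', IsSymm, transpose_mul, transpose_mul, transpose_transpose, diagonal_transpose,
      Matrix.mul_assoc]
  · exact hΘstar' ▸ (posDef_conj_orthogonal_iff hU₂).mpr (PosDef.diagonal hθ)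
  · set Θ' := Uᵀ * Θ * U
    have hΘ' : Θ = U * Θ' * Uᵀ := by
      simp only [Θ', ← Matrix.mul_assoc, hU₁, Matrix.one_mul]
      rw [Matrix.mul_assoc, hU₁, Matrix.mul_one]
    rw [hΘ', posDef_conj_orthogonal_iff hU₂] at hΘ
    have hne' : Θ' - diagonal θ ≠ 0 := fun h => hne (by rw [hΘ', sub_eq_zero.mp h, hΘstar'])
    change expandObjective n ρ A Θstar < expandObjective n ρ A Θ
    rw [hAdecomp, hΘstar', hΘ', expandObjective_conj_orthogonal hU₂,
      expandObjective_conj_orthogonal hU₂]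
    have hgap : 0 < ρ * ∑ i, ∑ j, (Θ' i j - diagonal θ i j) ^ 2 :=
      mul_pos hρ (sum_sq_entries_pos hne')
    linarith [expandObjective_diagonal_add_le hn.le hΘ hθ
      fun i => two_mul_expandRoot_mul_sub hn.le hρ (d i)]

/-- the Expand operator: for a symmetric p×p matrix A with
eigendecomposition A = U D Uᵀ (U orthogonal, D = diag(d)) and n, ρ > 0, the
matrix Θ* = (1/2) U (D + (D² + (2n/ρ)I)^{1/2}) Uᵀ is symmetric positive
definite and is the unique minimizer over symmetric positive definite matrices
of Θ ↦ −n log det Θ + ρ ‖Θ − A‖_F². -/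
theorem expand_minimizer (p : ℕ) (n ρ : ℝ) (hn : 0 < n) (hρ : 0 < ρ)
    (U : Matrix (Fin p) (Fin p) ℝ) (hU₁ : U * Uᵀ = 1) (hU₂ : Uᵀ * U = 1)
    (d : Fin p → ℝ) (A : Matrix (Fin p) (Fin p) ℝ) (hA : A.IsSymm)
    (hAdecomp : A = U * Matrix.diagonal d * Uᵀ)
    (Θstar : Matrix (Fin p) (Fin p) ℝ)
    (hΘstar : Θstar = (1 / 2 : ℝ) •
      (U * Matrix.diagonal (fun i => d i + Real.sqrt ((d i) ^ 2 + 2 * n / ρ)) * Uᵀ)) :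
    Θstar.IsSymm ∧ Θstar.PosDef ∧
    ∀ Θ : Matrix (Fin p) (Fin p) ℝ, Θ.PosDef → Θ ≠ Θstar →
      -n * Real.log Θstar.det
          + ρ * (∑ i : Fin p, ∑ j : Fin p, (Θstar i j - A i j) ^ 2)
        < -n * Real.log Θ.det
          + ρ * (∑ i : Fin p, ∑ j : Fin p, (Θ i j - A i j) ^ 2) :=
  expand_minimizer_general p n ρ hn hρ U hU₁ hU₂ d A hAdecomp Θstar hΘstar
end
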